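/- Let H be a complex separable Hilbert space, T a bounded operator on H, and (v_i)_{i∈I} a family in H such that {Tⁿ v_i : i ∈ I, n ≥ 0} is a Parseval frame of H. Then there is a linear isometric equivalence (unitary isomorphism) between the closed linear span of {v_i : i ∈ I} and the closure of the range of I − T T*. In particular, the Hilbert dimension of the closed linear span of the generators of any Parseval frame of iterations by T equals the Parseval frame index γ_p(T). -/

import Mathlib

/-!
Splitting off the terms with `n = 0` of the frame identity, the remaining terms form the frame
identity at `T* x`, so `∑ᵢ |⟪x, vᵢ⟫|² + ‖T* x‖² = ‖x‖²`, i.e.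
`⟪(1 - T T*) x, x⟫ = ∑ᵢ |⟪x, vᵢ⟫|²`. Hence `D = 1 - T T*` is positive, and as `D x = 0` iff
`⟪D x, x⟫ = 0` for a positive operator, `ker D` is the orthogonal complement of the generators.
Since `D` is self-adjoint, `closure (range D) = (ker D)ᗮ`: the two closed subspaces coincide.
-/

open scoped ComplexInnerProductSpace

open ContinuousLinearMap RCLike

def IsParsevalFrame (𝕜 : Type*) {H ι : Type*} [RCLike 𝕜] [NormedAddCommGroup H]
    [InnerProductSpace 𝕜 H] (x : ι → H) : Prop :=
  ∀ y : H, ∑' k, ‖inner 𝕜 y (x k)‖ ^ 2 = ‖y‖ ^ 2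

theorem tsum_prod_nat_eq_tsum_zero_add_tsum_succ {ι E : Type*} [NormedAddCommGroup E]
    [CompleteSpace E] {f : ι × ℕ → E} (hf : Summable f) :
    ∑' p, f p = ∑' i, f (i, 0) + ∑' p : ι × ℕ, f (p.1, p.2 + 1) := by
  have hzero : Summable fun i => f (i, 0) := hf.comp_injective (Prod.mk_left_injective 0)
  have hsucc : Summable fun p : ι × ℕ => f (p.1, p.2 + 1) :=
    hf.comp_injective fun p q h => by simpa [Prod.ext_iff] using h
  rw [hf.tsum_prod, hsucc.tsum_prod, ← hzero.tsum_add hsucc.prod]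
  exact tsum_congr fun i => (hf.prod_factor i).tsum_eq_zero_add

theorem re_inner_one_sub_mul_adjoint_apply_self {𝕜 H : Type*} [RCLike 𝕜]
    [NormedAddCommGroup H] [InnerProductSpace 𝕜 H] [CompleteSpace H] (T : H →L[𝕜] H) (x : H) :
    re (inner 𝕜 ((1 - T * adjoint T) x) x) = ‖x‖ ^ 2 - ‖adjoint T x‖ ^ 2 := by
  rw [sub_apply, one_apply_eq_self, mul_apply_eq_comp, inner_sub_left, ← adjoint_inner_right,
    map_sub, inner_self_eq_norm_sq, inner_self_eq_norm_sq]

theorem ContinuousLinearMap.IsPositive.apply_eq_zero_iff {H : Type*} [NormedAddCommGroup H]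
    [InnerProductSpace ℂ H] [CompleteSpace H] {A : H →L[ℂ] H} (hA : A.IsPositive) {x : H} :
    A x = 0 ↔ re ⟪A x, x⟫ = 0 := by
  obtain ⟨S, rfl⟩ := CStarAlgebra.nonneg_iff_eq_star_mul_self.mp ((nonneg_iff_isPositive A).mpr hA)
  have hker : (adjoint S * S) x = 0 ↔ S x = 0 := by
    simpa using SetLike.ext_iff.mp (ker_adjoint_comp_self S) x
  rw [star_eq_adjoint, hker, mul_apply_eq_comp, adjoint_inner_left, inner_self_eq_norm_sq]
  simp

theorem LinearMap.IsSymmetric.topologicalClosure_range {𝕜 H : Type*} [RCLike 𝕜]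
    [NormedAddCommGroup H] [InnerProductSpace 𝕜 H] [CompleteSpace H] {A : H →ₗ[𝕜] H}
    (hA : A.IsSymmetric) : (LinearMap.range A).topologicalClosure = (LinearMap.ker A)ᗮ := by
  rw [← Submodule.orthogonal_orthogonal_eq_closure, hA.orthogonal_range]

namespace IsParsevalFrame

section RCLike

variable {𝕜 H ι : Type*} [RCLike 𝕜] [NormedAddCommGroup H] [InnerProductSpace 𝕜 H]

theorem summable {x : ι → H} (hx : IsParsevalFrame 𝕜 x) (y : H) :
    Summable fun k => ‖inner 𝕜 y (x k)‖ ^ 2 := by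
  by_contra h
  obtain rfl : y = 0 := by simpa [tsum_eq_zero_of_not_summable h, eq_comm] using hx y
  simp at h

variable {T : H →L[𝕜] H} {v : ι → H}

theorem summable_generators (hv : IsParsevalFrame 𝕜 fun p : ι × ℕ => (T ^ p.2) (v p.1))
    (x : H) : Summable fun i => ‖inner 𝕜 x (v i)‖ ^ 2 := by
  simpa only [Function.comp_def, pow_zero, one_apply_eq_self] using
    (hv.summable x).comp_injective (Prod.mk_left_injective 0)

variable [CompleteSpace H]

theorem tsum_add_norm_adjoint_sq (hv : IsParsevalFrame 𝕜 fun p : ι × ℕ => (T ^ p.2) (v p.1))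
    (x : H) : ∑' i, ‖inner 𝕜 x (v i)‖ ^ 2 + ‖adjoint T x‖ ^ 2 = ‖x‖ ^ 2 := by
  have hshift (p : ι × ℕ) : ‖inner 𝕜 x ((T ^ (p.2 + 1)) (v p.1))‖ ^ 2
      = ‖inner 𝕜 (adjoint T x) ((T ^ p.2) (v p.1))‖ ^ 2 := by
    rw [pow_succ' T, mul_apply_eq_comp, adjoint_inner_left]
  rw [← hv x, tsum_prod_nat_eq_tsum_zero_add_tsum_succ (hv.summable x), tsum_congr hshift, hv]
  simp

theorem re_inner_one_sub_mul_adjoint_apply_self_eq_tsum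
    (hv : IsParsevalFrame 𝕜 fun p : ι × ℕ => (T ^ p.2) (v p.1)) (x : H) :
    re (inner 𝕜 ((1 - T * adjoint T) x) x) = ∑' i, ‖inner 𝕜 x (v i)‖ ^ 2 := by
  rw [re_inner_one_sub_mul_adjoint_apply_self, ← hv.tsum_add_norm_adjoint_sq x,
    add_sub_cancel_right]

theorem isPositive_one_sub_mul_adjoint
    (hv : IsParsevalFrame 𝕜 fun p : ι × ℕ => (T ^ p.2) (v p.1)) :
    (1 - T * adjoint T).IsPositive := by
  refine isPositive_def'.mpr ⟨?_, fun x => ?_⟩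
  · simpa only [star_eq_adjoint] using (IsSelfAdjoint.one _).sub (IsSelfAdjoint.mul_star_self T)
  · rw [reApplyInnerSelf_apply, hv.re_inner_one_sub_mul_adjoint_apply_self_eq_tsum]
    exact tsum_nonneg fun _ => sq_nonneg _

end RCLike

theorem ker_one_sub_mul_adjoint {H ι : Type*} [NormedAddCommGroup H] [InnerProductSpace ℂ H]
    [CompleteSpace H] {T : H →L[ℂ] H} {v : ι → H}
    (hv : IsParsevalFrame ℂ fun p : ι × ℕ => (T ^ p.2) (v p.1)) :
    LinearMap.ker ((1 - T * adjoint T : H →L[ℂ] H) : H →ₗ[ℂ] H)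
      = (Submodule.span ℂ (Set.range v))ᗮ := by
  ext x
  rw [LinearMap.mem_ker, coe_coe, hv.isPositive_one_sub_mul_adjoint.apply_eq_zero_iff,
    hv.re_inner_one_sub_mul_adjoint_apply_self_eq_tsum, ← (hv.summable_generators x).hasSum_iff,
    hasSum_zero_iff_of_nonneg fun _ => sq_nonneg _]
  simp [funext_iff, Submodule.span_range_eq_iSup, ← Submodule.iInf_orthogonal,
    Submodule.mem_orthogonal_singleton_iff_inner_left]

end IsParsevalFrame

theorem span_of_parseval_generators_isometric_defect_space_general
    (H : Type*) [NormedAddCommGroup H] [InnerProductSpace ℂ H] [CompleteSpace H]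
    (T : H →L[ℂ] H) {I : Type*} (v : I → H)
    (hParseval : ∀ x : H, ∑' p : I × ℕ, ‖⟪x, (T ^ p.2) (v p.1)⟫‖ ^ 2 = ‖x‖ ^ 2) :
    Nonempty
      (((Submodule.span ℂ (Set.range v)).topologicalClosure) ≃ₗᵢ[ℂ]
        ((LinearMap.range (((1 - T * ContinuousLinearMap.adjoint T : H →L[ℂ] H) : H →ₗ[ℂ] H))).topologicalClosure)) := by
  have hv : IsParsevalFrame ℂ fun p : I × ℕ => (T ^ p.2) (v p.1) := hParseval
  refine ⟨LinearIsometryEquiv.ofEq _ _ ?_⟩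
  rw [hv.isPositive_one_sub_mul_adjoint.isSymmetric.topologicalClosure_range,
    hv.ker_one_sub_mul_adjoint, Submodule.orthogonal_orthogonal_eq_closure]

/-- If `{Tⁿ vᵢ}` is a Parseval frame of iterations of `H`, then the
closed linear span of the generators `{vᵢ}` is unitarily isomorphic (via a linear
isometric equivalence) to the closure of the range of `I − T T*` (the defect space);
in particular its Hilbert dimension equals the Parseval frame index of `T`. -/
theorem span_of_parseval_generators_isometric_defect_space
    (H : Type*) [NormedAddCommGroup H] [InnerProductSpace ℂ H]
    [CompleteSpace H] [TopologicalSpace.SeparableSpace H]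
    (T : H →L[ℂ] H) {I : Type*} (v : I → H)
    (hParseval : ∀ x : H, ∑' p : I × ℕ, ‖⟪x, (T ^ p.2) (v p.1)⟫‖ ^ 2 = ‖x‖ ^ 2) :
    Nonempty
      (((Submodule.span ℂ (Set.range v)).topologicalClosure) ≃ₗᵢ[ℂ]
        ((LinearMap.range (((1 - T * ContinuousLinearMap.adjoint T : H →L[ℂ] H) : H →ₗ[ℂ] H))).topologicalClosure)) :=
  span_of_parseval_generators_isometric_defect_space_general H T v hParseval
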